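/- arXiv:1802.10337 — 6 statements merged into one kernel-verified Lean document; each statement's English description precedes it below -/
import Mathlib

section
/- Let K be an infinite field, let k, ℓ, n be positive integers with n ≥ 6k and ℓ ≥ 2, and let P_1, ..., P_ℓ be n×n matrices over K, each of rank exactly k. Then there exist matrices Q_1 similar to P_1, ..., Q_ℓ similar to P_ℓ such that k < rk(Q_1 + ... + Q_ℓ) ≤ 3k, and moreover rk(Q_1 + ... + Q_ℓ, I_n) = rk(Q_1 + ... + Q_ℓ). -/
open scoped ENat

/-- Two square matrices are similar if they are conjugate by an invertible matrix. -/
def MatSimilar {K : Type*} [Field K] {n : ℕ} (P Q : Matrix (Fin n) (Fin n) K) : Prop :=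
  ∃ A : (Matrix (Fin n) (Fin n) K)ˣ,
    Q = (A : Matrix (Fin n) (Fin n) K) * P * ((A⁻¹ : (Matrix (Fin n) (Fin n) K)ˣ) : Matrix (Fin n) (Fin n) K)

/-- The rank of the pair `(P, Q)`: infimum over `(μ₁ : μ₂) ∈ ℙ¹` of `rk(μ₁P + μ₂Q)`. -/
noncomputable def pairRank {K : Type*} [Field K] {n : ℕ}
    (P Q : Matrix (Fin n) (Fin n) K) : ℕ∞ :=
  ⨅ μ : {μ : K × K // μ ≠ 0}, ((μ.1.1 • P + μ.1.2 • Q).rank : ℕ∞)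


/-!
Conjugating by a suitable basis, a matrix of rank `k` becomes supported in a block `s × t` with
`s ⊆ t`, `#s = k`, `#t = 2k`: take a basis whose `s`-part spans the image and whose vectors outside
`t` lie in a complement of the image inside the kernel, which has dimension at least `n - 2k`.
Since `n ≥ 6k` there are three pairwise disjoint windows `t₀, t₁, t₂` of size `2k`; put `Q₁` in the
first, `Q₂` in the second and all the others in the third. Block additivity of rank gives
`rk (∑ Qᵢ) = 2k + rk (Q₃ + ⋯ + Q_ℓ) ∈ [2k, 3k]`. Finally, if `2 rk S ≤ n` and `μ₂ ≠ 0` then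
`rk (μ₁ S + μ₂ 1) ≥ n - rk S ≥ rk S`, so the rank of the pencil `(S, 1)` is `rk S`.
-/

open Matrix Module Submodule Finset

namespace Matrix

variable {m n α K : Type*}

def SupportedIn [Zero α] (M : Matrix m n α) (s : Finset m) (t : Finset n) : Prop :=
  ∀ i j, M i j ≠ 0 → i ∈ s ∧ j ∈ t

namespace SupportedIn

variable {M N : Matrix m n α} {s s' : Finset m} {t t' : Finset n}

theorem apply_eq_zero [Zero α] (h : M.SupportedIn s t) {i : m} {j : n}
    (hij : ¬(i ∈ s ∧ j ∈ t)) : M i j = 0 :=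
  not_imp_comm.1 (h i j) hij

theorem row_eq_zero [Zero α] (h : M.SupportedIn s t) {i : m} (hi : i ∉ s) : M i = 0 :=
  funext fun _ => h.apply_eq_zero fun hij => hi hij.1

theorem zero [Zero α] : (0 : Matrix m n α).SupportedIn s t :=
  fun _ _ h => absurd rfl h

theorem mono [Zero α] (h : M.SupportedIn s t) (hs : s ⊆ s') (ht : t ⊆ t') :
    M.SupportedIn s' t' :=
  fun i j hij => (h i j hij).imp (@hs i) (@ht j)

theorem add [AddZeroClass α] (hM : M.SupportedIn s t) (hN : N.SupportedIn s t) :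
    (M + N).SupportedIn s t := by
  intro i j hij
  by_contra hout
  exact hij (by rw [add_apply, hM.apply_eq_zero hout, hN.apply_eq_zero hout, add_zero])

theorem sum [AddCommMonoid α] {ι : Type*} {u : Finset ι} {M : ι → Matrix m n α}
    (h : ∀ x ∈ u, (M x).SupportedIn s t) : (∑ x ∈ u, M x).SupportedIn s t :=
  Finset.sum_induction _ (SupportedIn · s t) (fun _ _ => add) zero h

end SupportedIn

variable [Field K] {M N : Matrix m n K} {s s' : Finset m} {t t' : Finset n}

theorem SupportedIn.span_row_le_pi (h : M.SupportedIn s t) :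
    span K (Set.range M.row) ≤ Submodule.pi (↑t)ᶜ fun _ => ⊥ := by
  refine span_le.2 ?_
  rintro _ ⟨i, rfl⟩
  exact mem_pi.2 fun j hj => (mem_bot K).2 (h.apply_eq_zero fun hij => hj hij.2)

theorem SupportedIn.span_row_le_span_row_add (hM : M.SupportedIn s t) (hN : N.SupportedIn s' t')
    (hs : Disjoint s s') : span K (Set.range M.row) ≤ span K (Set.range (M + N).row) := by
  refine span_le.2 ?_
  rintro _ ⟨i, rfl⟩
  by_cases hi : i ∈ s
  · have hNi : N i = 0 := hN.row_eq_zero (disjoint_left.1 hs hi)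
    exact subset_span ⟨i, show M i + N i = M i by rw [hNi, add_zero]⟩
  · simp [row, hM.row_eq_zero hi]

variable [Fintype n]

theorem rank_add_le (A B : Matrix m n K) : (A + B).rank ≤ A.rank + B.rank := by
  unfold rank
  rw [mulVecLin_add]
  exact (finrank_mono (LinearMap.range_add_le _ _)).trans (finrank_add_le_finrank_add_finrank _ _)

variable [Fintype m]

theorem rank_smul_le (c : K) (A : Matrix m n K) : (c • A).rank ≤ A.rank := by
  classical
  simpa using rank_mul_le_right (c • (1 : Matrix m m K)) A

theorem SupportedIn.rank_le_card (h : M.SupportedIn s t) : M.rank ≤ #s := by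
  classical
  rw [rank_eq_finrank_span_row]
  have hspan : span K (Set.range M.row) ≤ span K ↑(s.image M.row) := by
    refine span_le.2 ?_
    rintro _ ⟨i, rfl⟩
    by_cases hi : i ∈ s
    · exact subset_span (by simpa using ⟨i, hi, rfl⟩)
    · simp [row, h.row_eq_zero hi]
  exact (finrank_mono hspan).trans ((finrank_span_finset_le_card _).trans card_image_le)

theorem rank_add_eq_of_supportedIn (hM : M.SupportedIn s t) (hN : N.SupportedIn s' t')
    (hs : Disjoint s s') (ht : Disjoint t t') : (M + N).rank = M.rank + N.rank := by
  refine le_antisymm (rank_add_le M N) ?_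
  simp only [rank_eq_finrank_span_row]
  have hdisj : Disjoint (span K (Set.range M.row)) (span K (Set.range N.row)) := by
    refine Disjoint.mono hM.span_row_le_pi hN.span_row_le_pi (disjoint_def.2 fun x hx hx' => ?_)
    funext j
    by_cases hj : j ∈ t
    · exact (mem_bot K).1 (mem_pi.1 hx' j (disjoint_left.1 ht hj))
    · exact (mem_bot K).1 (mem_pi.1 hx j hj)
  have hsup := finrank_sup_add_finrank_inf_eq (span K (Set.range M.row)) (span K (Set.range N.row))
  rw [hdisj.eq_bot, finrank_bot, add_zero] at hsup
  rw [← hsup]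
  refine finrank_mono (sup_le (hM.span_row_le_span_row_add hN hs) ?_)
  rw [add_comm M N]
  exact hN.span_row_le_span_row_add hM hs.symm

end Matrix

section

variable {K V : Type*} [Field K] [AddCommGroup V] [Module K V] [FiniteDimensional K V]

theorem Submodule.exists_linearIndependent_of_card_le {κ : Type*} [Fintype κ] (W : Submodule K V)
    (h : Fintype.card κ ≤ finrank K W) : ∃ v : κ → V, LinearIndependent K v ∧ ∀ x, v x ∈ W := by
  obtain ⟨e⟩ := Function.Embedding.nonempty_of_card_le (h.trans_eq (Fintype.card_fin _).symm)
  let b := Module.finBasis K W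
  exact ⟨fun x => b (e x), (b.linearIndependent.map' W.subtype W.ker_subtype).comp e e.injective,
    fun x => (b (e x)).2⟩

theorem LinearIndependent.exists_basis_apply_embedding {κ ι : Type*} [Fintype κ] [Fintype ι]
    {v : κ → V} (hv : LinearIndependent K v) (e : κ ↪ ι) (hι : Fintype.card ι = finrank K V) :
    ∃ b : Basis ι K V, ∀ x, b (e x) = v x := by
  classical
  obtain ⟨W, hW⟩ := (span K (Set.range v)).exists_isCompl
  have hcard : Fintype.card {i // i ∉ Set.range e} = finrank K W := by
    have := finrank_add_eq_of_isCompl hW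
    rw [finrank_span_eq_card hv] at this
    rw [Fintype.card_subtype_compl, Fintype.card_range]
    omega
  obtain ⟨w, hw, hwW⟩ := W.exists_linearIndependent_of_card_le hcard.le
  have hvw : LinearIndependent K (Sum.elim v w) :=
    hv.sum_type hw (hW.disjoint.mono_right (span_le.2 (Set.range_subset_iff.2 hwW)))
  let σ : κ ⊕ {i // i ∉ Set.range e} ≃ ι :=
    ((Equiv.ofInjective e e.injective).sumCongr (Equiv.refl _)).trans (Equiv.sumCompl _)
  refine ⟨basisOfLinearIndependentOfCardEqFinrank' _ (hvw.comp σ.symm σ.symm.injective) hι,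
    fun x => ?_⟩
  have hσ : σ.symm (e x) = Sum.inl x := σ.symm_apply_eq.2 rfl
  simp [hσ]

theorem LinearMap.exists_le_ker_disjoint_range (f : V →ₗ[K] V) :
    ∃ N ≤ LinearMap.ker f, Disjoint (LinearMap.range f) N ∧
      finrank K V ≤ finrank K N + 2 * finrank K (LinearMap.range f) := by
  obtain ⟨W, hW⟩ := (LinearMap.range f).exists_isCompl
  refine ⟨W ⊓ LinearMap.ker f, inf_le_right, hW.disjoint.mono_right inf_le_left, ?_⟩
  have h1 := finrank_sup_add_finrank_inf_eq W (LinearMap.ker f)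
  have h2 := finrank_add_eq_of_isCompl hW
  have h3 := f.finrank_range_add_finrank_ker
  have h4 := (W ⊔ LinearMap.ker f).finrank_le
  omega

theorem LinearMap.exists_basis_toMatrix_supportedIn {ι : Type*} [Fintype ι] [DecidableEq ι]
    (f : V →ₗ[K] V) {s t : Finset ι} (hst : s ⊆ t) (hs : #s = finrank K (LinearMap.range f))
    (ht : 2 * #s ≤ #t) (hι : Fintype.card ι = finrank K V) :
    ∃ b : Basis ι K V, (LinearMap.toMatrix b b f).SupportedIn s t := by
  obtain ⟨N, hNker, hdisj, hN⟩ := f.exists_le_ker_disjoint_range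
  obtain ⟨u, hu, huR⟩ := (LinearMap.range f).exists_linearIndependent_of_card_le (κ := s)
    (by rw [Fintype.card_coe, hs])
  obtain ⟨w, hw, hwN⟩ := N.exists_linearIndependent_of_card_le (κ := ↥tᶜ)
    (by rw [Fintype.card_coe, card_compl]; omega)
  have hspan : span K (Set.range u) = LinearMap.range f :=
    eq_of_le_of_finrank_le (span_le.2 (Set.range_subset_iff.2 huR))
      (by rw [finrank_span_eq_card hu, Fintype.card_coe, hs])
  let e : s ⊕ ↥tᶜ ↪ ι := ⟨Sum.elim Subtype.val Subtype.val,
    Subtype.val_injective.sumElim Subtype.val_injective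
      fun a b hab => mem_compl.1 b.2 (hab ▸ hst a.2)⟩
  have huw : LinearIndependent K (Sum.elim u w) :=
    hu.sum_type hw (hdisj.mono hspan.le (span_le.2 (Set.range_subset_iff.2 hwN)))
  obtain ⟨b, hb⟩ := huw.exists_basis_apply_embedding e hι
  refine ⟨b, fun i j hij => ⟨?_, ?_⟩⟩
  · have hrange : f (b j) ∈ span K (b '' s) := by
      refine span_mono ?_ (hspan ▸ LinearMap.mem_range_self f (b j))
      rintro _ ⟨x, rfl⟩
      exact ⟨x, x.2, hb (Sum.inl x)⟩
    exact (b.mem_span_image.1 hrange) (Finsupp.mem_support_iff.2 (by rwa [toMatrix_apply] at hij))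
  · by_contra hj
    have hbj : b j = w ⟨j, mem_compl.2 hj⟩ := hb (Sum.inr ⟨j, mem_compl.2 hj⟩)
    rw [toMatrix_apply, hbj, LinearMap.mem_ker.1 (hNker (hwN _)), map_zero] at hij
    exact hij rfl

end

open Function in
theorem Finset.exists_disjoint_windows {ι : Type*} [Fintype ι] {m k : ℕ}
    (h : m * (2 * k) ≤ Fintype.card ι) :
    ∃ s t : Fin m → Finset ι, (∀ a, s a ⊆ t a ∧ #(s a) = k ∧ #(t a) = 2 * k) ∧
      Pairwise (Disjoint on t) := by
  obtain ⟨e⟩ := Function.Embedding.nonempty_of_card_le (α := Fin m × (Fin k ⊕ Fin k))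
    (by simpa [two_mul] using h)
  let g (a : Fin m) : Fin k ⊕ Fin k ↪ ι := (Function.Embedding.sectR a _).trans e
  refine ⟨fun a => (univ.map .inl).map (g a), fun a => univ.map (g a), fun a => ⟨?_, ?_, ?_⟩, ?_⟩
  · exact map_subset_map.2 (subset_univ _)
  · simp
  · simp [two_mul]
  · intro a a' haa'
    simp only [Function.onFun, disjoint_left, mem_map, mem_univ, true_and, not_exists]
    rintro _ ⟨x, rfl⟩ y hxy
    exact haa' (congrArg Prod.fst (e.injective hxy)).symm

section Similarity

variable {K : Type*} [Field K] {n : ℕ}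

theorem MatSimilar.rank_eq {P Q : Matrix (Fin n) (Fin n) K} (h : MatSimilar P Q) :
    Q.rank = P.rank := by
  obtain ⟨A, rfl⟩ := h
  rw [rank_mul_eq_left_of_isUnit_det _ _ ((isUnit_iff_isUnit_det _).mp (A⁻¹).isUnit),
    rank_mul_eq_right_of_isUnit_det _ _ ((isUnit_iff_isUnit_det _).mp A.isUnit)]

theorem matSimilar_toMatrix_toLin' (P : Matrix (Fin n) (Fin n) K)
    (b : Basis (Fin n) K (Fin n → K)) : MatSimilar P (LinearMap.toMatrix b b (toLin' P)) := by
  let e := Pi.basisFun K (Fin n)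
  refine ⟨⟨b.toMatrix e, e.toMatrix b, b.toMatrix_mul_toMatrix_flip e,
    e.toMatrix_mul_toMatrix_flip b⟩, ?_⟩
  rw [← basis_toMatrix_mul_linearMap_toMatrix_mul_basis_toMatrix (b := b) (b' := e) (c := b)
    (c' := e), LinearMap.toMatrix_eq_toMatrix', LinearMap.toMatrix'_toLin']
  rfl

theorem exists_matSimilar_supportedIn (P : Matrix (Fin n) (Fin n) K) {s t : Finset (Fin n)}
    (hst : s ⊆ t) (hs : #s = P.rank) (ht : 2 * #s ≤ #t) :
    ∃ Q, MatSimilar P Q ∧ Q.SupportedIn s t := by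
  obtain ⟨b, hb⟩ := (toLin' P).exists_basis_toMatrix_supportedIn hst hs ht (by simp)
  exact ⟨_, matSimilar_toMatrix_toLin' P b, hb⟩

theorem pairRank_one_eq_rank (S : Matrix (Fin n) (Fin n) K) (h : 2 * S.rank ≤ n) :
    pairRank S 1 = S.rank := by
  refine le_antisymm (iInf_le_of_le ⟨(1, 0), by simp⟩ (by simp)) (le_iInf fun ⟨(a, b), hab⟩ => ?_)
  simp only [Nat.cast_le]
  rcases eq_or_ne b 0 with rfl | hb
  · have ha : a ≠ 0 := by rintro rfl; exact hab rfl
    simp [rank_smul_of_mem_nonZeroDivisors S (mem_nonZeroDivisors_of_ne_zero ha)]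
  · have hn : n ≤ (a • S + b • 1).rank + S.rank := calc
        n = (b • (1 : Matrix (Fin n) (Fin n) K)).rank := by
          rw [rank_smul_of_mem_nonZeroDivisors _ (mem_nonZeroDivisors_of_ne_zero hb), rank_one,
            Fintype.card_fin]
        _ = (a • S + b • 1 + (-a) • S).rank := by congr 1; module
        _ ≤ (a • S + b • 1).rank + ((-a) • S).rank := rank_add_le _ _
        _ ≤ (a • S + b • 1).rank + S.rank := by gcongr; exact rank_smul_le _ _
    omega

end Similarity

theorem exists_similar_sum_rank_between_general {K : Type*} [Field K]
    (k l n : ℕ) (hk : 0 < k) (hl : 2 ≤ l) (hn : 6 * k ≤ n)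
    (P : Fin l → Matrix (Fin n) (Fin n) K) (hrk : ∀ i, (P i).rank = k) :
    ∃ Q : Fin l → Matrix (Fin n) (Fin n) K,
      (∀ i, MatSimilar (P i) (Q i)) ∧
      k < (∑ i, Q i).rank ∧ (∑ i, Q i).rank ≤ 3 * k ∧
      pairRank (∑ i, Q i) 1 = (((∑ i, Q i).rank : ℕ) : ℕ∞) := by
  obtain ⟨m, rfl⟩ : ∃ m, l = m + 2 := ⟨l - 2, by omega⟩
  obtain ⟨s, t, hst, ht⟩ := exists_disjoint_windows (ι := Fin n) (m := 3) (k := k) (by simp; omega)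
  let c : Fin (m + 2) → Fin 3 := Fin.cons 0 (Fin.cons 1 fun _ => 2)
  choose Q hsim hQ using fun i => exists_matSimilar_supportedIn (P i) (hst (c i)).1
    (by rw [(hst _).2.1, hrk]) (by rw [(hst _).2.1, (hst _).2.2])
  have hrkQ (i) : (Q i).rank = k := (hsim i).rank_eq.trans (hrk i)
  set R := ∑ i : Fin m, Q i.succ.succ
  have hR : R.SupportedIn (s 2) (t 2) := SupportedIn.sum fun i _ => hQ i.succ.succ
  have hsum : ∑ i, Q i = Q 0 + (Q 1 + R) := by simp [Fin.sum_univ_succ, R]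
  have hQ0 : (Q 0).SupportedIn (t 0) (t 0) := (hQ 0).mono (hst 0).1 subset_rfl
  have hQ1 : (Q 1).SupportedIn (t 1) (t 1) := (hQ 1).mono (hst 1).1 subset_rfl
  have hR' : R.SupportedIn (t 2) (t 2) := hR.mono (hst 2).1 subset_rfl
  have h12 : Disjoint (t 1) (t 2) := ht (by decide)
  have h012 : Disjoint (t 0) (t 1 ∪ t 2) := disjoint_union_right.2 ⟨ht (by decide), ht (by decide)⟩
  have hQ1R := (hQ1.mono subset_union_left subset_union_left).add
    (hR'.mono subset_union_right subset_union_right)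
  have hrank : (∑ i, Q i).rank = k + (k + R.rank) := by
    rw [hsum, rank_add_eq_of_supportedIn hQ0 hQ1R h012 h012,
      rank_add_eq_of_supportedIn hQ1 hR' h12 h12, hrkQ, hrkQ]
  have hRk : R.rank ≤ k := hR.rank_le_card.trans_eq (hst 2).2.1
  refine ⟨Q, hsim, by omega, by omega, pairRank_one_eq_rank _ (by omega)⟩

/-- Given `n ≥ 6k`, `ℓ ≥ 2`, and matrices `P_1, …, P_ℓ` of rank `k`, there are similar
matrices `Q_i ∼ P_i` with `k < rk(Q_1 + ⋯ + Q_ℓ) ≤ 3k` and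
`rk(Q_1 + ⋯ + Q_ℓ, I_n) = rk(Q_1 + ⋯ + Q_ℓ)`. -/
theorem exists_similar_sum_rank_between {K : Type*} [Field K] [Infinite K]
    (k l n : ℕ) (hk : 0 < k) (hl : 2 ≤ l) (hn : 6 * k ≤ n)
    (P : Fin l → Matrix (Fin n) (Fin n) K) (hrk : ∀ i, (P i).rank = k) :
    ∃ Q : Fin l → Matrix (Fin n) (Fin n) K,
      (∀ i, MatSimilar (P i) (Q i)) ∧
      k < (∑ i, Q i).rank ∧ (∑ i, Q i).rank ≤ 3 * k ∧
      pairRank (∑ i, Q i) 1 = (((∑ i, Q i).rank : ℕ) : ℕ∞) :=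
  exists_similar_sum_rank_between_general k l n hk hl hn P hrk
end

section
/- Let (W_i)_{i≥1} be a sequence of finite-dimensional vector spaces with surjective linear maps W_{i+1} → W_i, let W be the inverse limit, let X ⊆ W be a closed subset (i.e., the inverse limit of closed subsets of the W_i), and let X_i be the Zariski closure of the projection of X to W_i. Then the following are equivalent: (1) X is irreducible (if X = Y ∪ Z for closed Y, Z ⊆ X then X = Y or X = Z); (2) X_i is irreducible for all i ≥ 1; (3) X_i is irreducible for all sufficiently large i. -/
/-- Zariski-closed subsets of the affine space `K^m`. -/
def ZClosed {K : Type*} [Field K] {m : ℕ} (S : Set (Fin m → K)) : Prop :=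
  ∃ T : Set (MvPolynomial (Fin m) K),
    S = {x | ∀ f ∈ T, MvPolynomial.eval x f = 0}

/-- The Zariski closure of a subset of `K^m`. -/
def zclosure {K : Type*} [Field K] {m : ℕ} (S : Set (Fin m → K)) : Set (Fin m → K) :=
  ⋂₀ {C | ZClosed C ∧ S ⊆ C}

/-- Irreducibility (in the sense of the paper): whenever the set is a union of two
Zariski-closed subsets, it equals one of them. -/
def ZIrreducible {K : Type*} [Field K] {m : ℕ} (S : Set (Fin m → K)) : Prop :=
  ∀ Y Z, ZClosed Y → ZClosed Z → S = Y ∪ Z → S = Y ∨ S = Z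

/-- The inverse limit of a tower of finite-dimensional spaces `W_i = K^{d i}` along the
linear maps `f i : W_{i+1} → W_i`. -/
def TowerLimit {K : Type*} [Field K] (d : ℕ → ℕ)
    (f : ∀ i : ℕ, (Fin (d (i + 1)) → K) →ₗ[K] (Fin (d i) → K)) : Type _ :=
  {x : ∀ i : ℕ, Fin (d i) → K // ∀ i, f i (x (i + 1)) = x i}

/-- Closed subsets of the inverse limit: inverse limits of closed subsets. -/
def ClosedLim {K : Type*} [Field K] {d : ℕ → ℕ}
    {f : ∀ i : ℕ, (Fin (d (i + 1)) → K) →ₗ[K] (Fin (d i) → K)}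
    (X : Set (TowerLimit d f)) : Prop :=
  ∃ C : ∀ i : ℕ, Set (Fin (d i) → K),
    (∀ i, ZClosed (C i)) ∧ X = {x | ∀ i, x.1 i ∈ C i}

/-- Irreducibility of a subset of the inverse limit, in the sense of the paper. -/
def IrrLim {K : Type*} [Field K] {d : ℕ → ℕ}
    {f : ∀ i : ℕ, (Fin (d (i + 1)) → K) →ₗ[K] (Fin (d i) → K)}
    (X : Set (TowerLimit d f)) : Prop :=
  ∀ Y Z, ClosedLim Y → ClosedLim Z → X = Y ∪ Z → X = Y ∨ X = Z

section Aux
open MvPolynomial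
variable {K : Type*} [Field K] {m n : ℕ}

lemma subset_zclosure (S : Set (Fin m → K)) : S ⊆ zclosure S :=
  fun _ hx => Set.mem_sInter.2 fun _ hC => hC.2 hx

lemma zclosure_min {S C : Set (Fin m → K)} (h1 : ZClosed C) (h2 : S ⊆ C) :
    zclosure S ⊆ C :=
  Set.sInter_subset_of_mem ⟨h1, h2⟩

lemma zclosure_eq (S : Set (Fin m → K)) :
    zclosure S = {x | ∀ g : MvPolynomial (Fin m) K, (∀ y ∈ S, eval y g = 0) → eval x g = 0} := by
  apply Set.Subset.antisymm
  · exact zclosure_min ⟨{g | ∀ y ∈ S, eval y g = 0}, rfl⟩ (fun y hy g hg => hg y hy)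
  · intro x hx C hC
    obtain ⟨⟨T, rfl⟩, hSC⟩ := hC
    exact fun g hg => hx g (fun y hy => hSC hy g hg)

lemma zclosed_zclosure (S : Set (Fin m → K)) : ZClosed (zclosure S) := by
  rw [zclosure_eq]; exact ⟨{g | ∀ y ∈ S, eval y g = 0}, rfl⟩

lemma zclosure_mono {S S' : Set (Fin m → K)} (h : S ⊆ S') : zclosure S ⊆ zclosure S' :=
  zclosure_min (zclosed_zclosure S') (h.trans (subset_zclosure S'))

lemma zclosed_univ : ZClosed (Set.univ : Set (Fin m → K)) :=
  ⟨∅, by ext x; simp⟩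

lemma zclosed_inter {C D : Set (Fin m → K)} (hC : ZClosed C) (hD : ZClosed D) :
    ZClosed (C ∩ D) := by
  obtain ⟨T, rfl⟩ := hC
  obtain ⟨T', rfl⟩ := hD
  refine ⟨T ∪ T', ?_⟩
  ext x
  constructor
  · rintro ⟨h1, h2⟩ g hg
    rcases hg with hg | hg
    · exact h1 g hg
    · exact h2 g hg
  · intro h
    exact ⟨fun g hg => h g (Or.inl hg), fun g hg => h g (Or.inr hg)⟩

lemma zclosed_union {C D : Set (Fin m → K)} (hC : ZClosed C) (hD : ZClosed D) :
    ZClosed (C ∪ D) := by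
  obtain ⟨T, rfl⟩ := hC
  obtain ⟨T', rfl⟩ := hD
  refine ⟨Set.image2 (· * ·) T T', ?_⟩
  ext x
  constructor
  · rintro (h | h) p hp
    · obtain ⟨g, hg, g', _, rfl⟩ := hp
      simp [h g hg]
    · obtain ⟨g, _, g', hg', rfl⟩ := hp
      simp [h g' hg']
  · intro h
    by_cases h1 : ∀ g ∈ T, eval x g = 0
    · exact Or.inl h1
    · push_neg at h1
      obtain ⟨g, hg, hgx⟩ := h1
      refine Or.inr fun g' hg' => ?_
      have := h (g * g') (Set.mem_image2_of_mem hg hg')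
      rw [map_mul] at this
      exact (mul_eq_zero.1 this).resolve_left hgx

lemma zclosure_union (S S' : Set (Fin m → K)) :
    zclosure (S ∪ S') = zclosure S ∪ zclosure S' := by
  apply Set.Subset.antisymm
  · exact zclosure_min (zclosed_union (zclosed_zclosure S) (zclosed_zclosure S'))
      (Set.union_subset_union (subset_zclosure S) (subset_zclosure S'))
  · exact Set.union_subset (zclosure_mono Set.subset_union_left)
      (zclosure_mono Set.subset_union_right)

/-- The preimage of a Zariski-closed set under a linear map is Zariski-closed. -/
lemma zclosed_preimage_linear (g : (Fin n → K) →ₗ[K] (Fin m → K)) {C : Set (Fin m → K)}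
    (hC : ZClosed C) : ZClosed (g ⁻¹' C) := by
  obtain ⟨T, rfl⟩ := hC
  set p : Fin m → MvPolynomial (Fin n) K :=
    fun j => ∑ i : Fin n, MvPolynomial.C (g (fun k => if i = k then 1 else 0) j) *
      MvPolynomial.X i with hp
  have key : ∀ (x : Fin n → K) (φ : MvPolynomial (Fin m) K),
      eval x (bind₁ p φ) = eval (g x) φ := by
    intro x φ
    have h1 : eval x (bind₁ p φ) = eval (fun j => eval x (p j)) φ :=
      eval₂Hom_bind₁ _ _ _ _
    have h2 : (fun j => eval x (p j)) = g x := by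
      funext j
      rw [hp]
      simp only [map_sum, map_mul, eval_C, eval_X]
      rw [LinearMap.pi_apply_eq_sum_univ g x]
      rw [Finset.sum_apply]
      exact Finset.sum_congr rfl (fun i _ => by simp [mul_comm])
    rw [h1, h2]
  refine ⟨(bind₁ p) '' T, ?_⟩
  ext x
  constructor
  · rintro h φ' ⟨φ, hφ, rfl⟩
    rw [key]
    exact h φ hφ
  · intro h φ hφ
    have := h (bind₁ p φ) ⟨φ, hφ, rfl⟩
    rwa [key] at this

lemma image_zclosure_subset (g : (Fin n → K) →ₗ[K] (Fin m → K)) (S : Set (Fin n → K)) :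
    g '' zclosure S ⊆ zclosure (g '' S) := by
  have h : zclosure S ⊆ g ⁻¹' (zclosure (g '' S)) :=
    zclosure_min (zclosed_preimage_linear g (zclosed_zclosure _))
      (fun x hx => subset_zclosure _ (Set.mem_image_of_mem g hx))
  exact Set.image_subset_iff.2 h

end Aux

section Tower

variable {K : Type*} [Field K] {d : ℕ → ℕ}
  {f : ∀ i : ℕ, (Fin (d (i + 1)) → K) →ₗ[K] (Fin (d i) → K)}

/-- The composition of the transition maps from level `i + k` down to level `i`. -/
def iterMap (f : ∀ i : ℕ, (Fin (d (i + 1)) → K) →ₗ[K] (Fin (d i) → K)) (i : ℕ) :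
    ∀ k : ℕ, (Fin (d (i + k)) → K) →ₗ[K] (Fin (d i) → K)
  | 0 => LinearMap.id
  | (k + 1) => (iterMap f i k).comp (f (i + k))

lemma iterMap_proj (x : TowerLimit d f) (i : ℕ) : ∀ k : ℕ,
    iterMap f i k (x.1 (i + k)) = x.1 i
  | 0 => rfl
  | (k + 1) => by
    show iterMap f i k (f (i + k) (x.1 (i + k + 1))) = x.1 i
    rw [x.2 (i + k)]
    exact iterMap_proj x i k

lemma proj_comp (i k : ℕ) :
    (fun x : TowerLimit d f => x.1 i) = (iterMap f i k) ∘ (fun x => x.1 (i + k)) :=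
  funext fun x => (iterMap_proj x i k).symm

/-- The Zariski closure of the projection of `X` to level `i`. -/
def projClosure (X : Set (TowerLimit d f)) (i : ℕ) : Set (Fin (d i) → K) :=
  zclosure ((fun x : TowerLimit d f => x.1 i) '' X)

lemma mem_projClosure {X : Set (TowerLimit d f)} {x : TowerLimit d f} (hx : x ∈ X) (i : ℕ) :
    x.1 i ∈ projClosure X i :=
  subset_zclosure _ ⟨x, hx, rfl⟩

lemma projClosure_down (X : Set (TowerLimit d f)) (i k : ℕ) :
    iterMap f i k '' projClosure X (i + k) ⊆ projClosure X i := by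
  refine (image_zclosure_subset (iterMap f i k) _).trans ?_
  unfold projClosure
  rw [← Set.image_comp, ← proj_comp i k]

lemma closedLim_eq {Y : Set (TowerLimit d f)} (hY : ClosedLim Y) :
    Y = {x | ∀ i, x.1 i ∈ projClosure Y i} := by
  obtain ⟨B, hB, hYeq⟩ := hY
  ext x
  constructor
  · intro hx i
    exact mem_projClosure hx i
  · intro hx
    rw [hYeq]
    intro i
    have hsub : projClosure Y i ⊆ B i := by
      apply zclosure_min (hB i)
      rintro _ ⟨y, hy, rfl⟩
      rw [hYeq] at hy
      exact hy i
    exact hsub (hx i)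

/-- Insert a closed subset of level `i` into the constant-`univ` family. -/
def insertAt {K : Type*} [Field K] {d : ℕ → ℕ} (i : ℕ) (Y : Set (Fin (d i) → K)) (j : ℕ) :
    Set (Fin (d j) → K) :=
  if h : j = i then by rw [h]; exact Y else Set.univ

lemma insertAt_self (i : ℕ) (Y : Set (Fin (d i) → K)) : insertAt i Y i = Y := by
  rw [insertAt, dif_pos rfl]
  rfl

lemma insertAt_ne {i j : ℕ} (h : j ≠ i) (Y : Set (Fin (d i) → K)) :
    insertAt i Y j = Set.univ :=
  dif_neg h

lemma zclosed_insertAt {i : ℕ} {Y : Set (Fin (d i) → K)} (hY : ZClosed Y) (j : ℕ) :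
    ZClosed (insertAt i Y j) := by
  rcases eq_or_ne j i with rfl | h
  · rw [insertAt_self]; exact hY
  · rw [insertAt_ne h]; exact zclosed_univ

/-- Forward direction: irreducibility of the limit implies irreducibility of each
projection closure. -/
lemma irr_proj {X : Set (TowerLimit d f)} (hX : ClosedLim X) (hirr : IrrLim X) (i : ℕ) :
    ZIrreducible (projClosure X i) := by
  intro Y Z hY hZ hYZ
  obtain ⟨C, hC, hXeq⟩ := hX
  set Y' : Set (TowerLimit d f) := {x | ∀ j, x.1 j ∈ C j ∩ insertAt i Y j} with hY'
  set Z' : Set (TowerLimit d f) := {x | ∀ j, x.1 j ∈ C j ∩ insertAt i Z j} with hZ'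
  have hY'cl : ClosedLim Y' :=
    ⟨fun j => C j ∩ insertAt i Y j,
      fun j => zclosed_inter (hC j) (zclosed_insertAt hY j), rfl⟩
  have hZ'cl : ClosedLim Z' :=
    ⟨fun j => C j ∩ insertAt i Z j,
      fun j => zclosed_inter (hC j) (zclosed_insertAt hZ j), rfl⟩
  have hXY' : X = Y' ∪ Z' := by
    ext x
    constructor
    · intro hx
      have hxC : ∀ j, x.1 j ∈ C j := by rw [hXeq] at hx; exact hx
      have hxi : x.1 i ∈ Y ∪ Z := by
        rw [← hYZ]; exact mem_projClosure hx i
      rcases hxi with h | h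
      · left
        intro j
        refine ⟨hxC j, ?_⟩
        rcases eq_or_ne j i with rfl | hne
        · rw [insertAt_self]; exact h
        · rw [insertAt_ne hne]; trivial
      · right
        intro j
        refine ⟨hxC j, ?_⟩
        rcases eq_or_ne j i with rfl | hne
        · rw [insertAt_self]; exact h
        · rw [insertAt_ne hne]; trivial
    · rintro (hx | hx) <;> (rw [hXeq]; intro j; exact (hx j).1)
  rcases hirr Y' Z' hY'cl hZ'cl hXY' with h | h
  · left
    refine Set.Subset.antisymm (zclosure_min hY ?_) (hYZ ▸ Set.subset_union_left)
    rintro _ ⟨x, hx, rfl⟩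
    rw [h] at hx
    have := (hx i).2
    rwa [insertAt_self] at this
  · right
    refine Set.Subset.antisymm (zclosure_min hZ ?_) (hYZ ▸ Set.subset_union_right)
    rintro _ ⟨x, hx, rfl⟩
    rw [h] at hx
    have := (hx i).2
    rwa [insertAt_self] at this

/-- Backward direction: eventual irreducibility of the projection closures implies
irreducibility of the limit. -/
lemma eventually_irr {X : Set (TowerLimit d f)} (N : ℕ)
    (h : ∀ i, N ≤ i → ZIrreducible (projClosure X i)) : IrrLim X := by
  intro Y Z hY hZ hXYZ
  have hXi : ∀ i, projClosure X i = projClosure Y i ∪ projClosure Z i := by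
    intro i
    unfold projClosure
    rw [hXYZ, Set.image_union, zclosure_union]
  have main : ∀ W : Set (TowerLimit d f), ClosedLim W →
      (∀ n, ∃ j, n ≤ j ∧ projClosure X j = projClosure W j) → X ⊆ W := by
    intro W hW hcof x hx
    rw [closedLim_eq hW]
    intro i
    obtain ⟨j, hij, hj⟩ := hcof i
    obtain ⟨k, rfl⟩ := Nat.exists_eq_add_of_le hij
    have hxj : x.1 (i + k) ∈ projClosure W (i + k) := hj ▸ mem_projClosure hx (i + k)
    exact projClosure_down W i k ⟨x.1 (i + k), hxj, iterMap_proj x i k⟩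
  by_cases hA : ∀ n, ∃ j, n ≤ j ∧ projClosure X j = projClosure Y j
  · left
    exact Set.Subset.antisymm (main Y hY hA) (hXYZ ▸ Set.subset_union_left)
  · push_neg at hA
    obtain ⟨n, hn⟩ := hA
    right
    have hcof : ∀ m, ∃ j, m ≤ j ∧ projClosure X j = projClosure Z j := by
      intro m
      refine ⟨max m (max n N), le_max_left _ _, ?_⟩
      have hj1 : n ≤ max m (max n N) := le_trans (le_max_left n N) (le_max_right m _)
      have hj2 : N ≤ max m (max n N) := le_trans (le_max_right n N) (le_max_right m _)
      rcases h _ hj2 (projClosure Y _) (projClosure Z _) (zclosed_zclosure _)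
        (zclosed_zclosure _) (hXi _) with hh | hh
      · exact absurd hh (hn _ hj1)
      · exact hh
    exact Set.Subset.antisymm (main Z hZ hcof) (hXYZ ▸ Set.subset_union_right)

end Tower

/-- For a closed subset `X` of the inverse limit of a tower of finite-dimensional spaces
with surjective transition maps, with `X_i` the Zariski closure of the projection of `X`
to `W_i`, the following are equivalent: (1) `X` is irreducible; (2) every `X_i` is
irreducible; (3) `X_i` is irreducible for all sufficiently large `i`. -/
theorem irreducible_limit_iff_irreducible_projections {K : Type*} [Field K]
    (d : ℕ → ℕ) (f : ∀ i : ℕ, (Fin (d (i + 1)) → K) →ₗ[K] (Fin (d i) → K))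
    (hf : ∀ i, Function.Surjective (f i))
    (X : Set (TowerLimit d f)) (hX : ClosedLim X) :
    (IrrLim X ↔ ∀ i : ℕ, ZIrreducible (zclosure ((fun x : TowerLimit d f => x.1 i) '' X))) ∧
    (IrrLim X ↔ ∃ N : ℕ, ∀ i : ℕ, N ≤ i →
        ZIrreducible (zclosure ((fun x : TowerLimit d f => x.1 i) '' X))) := by
  constructor
  · constructor
    · intro hirr i
      exact irr_proj hX hirr i
    · intro hall
      exact eventually_irr 0 (fun i _ => hall i)
  · constructor
    · intro hirr
      exact ⟨0, fun i _ => irr_proj hX hirr i⟩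
    · rintro ⟨N, hN⟩
      exact eventually_irr N hN
end

section
/- Let Γ be a finite undirected multigraph (loops allowed), and consider the reduction rules: (1) delete an edge; (2) delete a vertex that has at least one loop (together with all edges incident to it); (3) if a vertex v has at least one loop, replace an edge with endpoints v ≠ w by a loop at w. If Γ reduces to the empty graph by a sequence of these rules, then the linear map ℓ_Γ : K^{E(Γ)} → K^{V(Γ)} sending (x_e)_e to the vector whose v-coordinate is the sum of x_e over edges e incident to v (loops counted once) is surjective. -/
/-- A finite undirected multigraph with vertices drawn from `α` and edges drawn from `β`:
a finite vertex set, a finite edge set, and an endpoint assignment (loops allowed). -/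
structure MGraph (α β : Type*) where
  Vs : Finset α
  Es : Finset β
  ends : β → Sym2 α

/-- One step of reduction: (1) delete an edge; (2) delete a vertex with at least one loop
(together with all incident edges); (3) if `v` has a loop, replace an edge with endpoints
`v ≠ w` by a loop at `w`. -/
inductive MGraph.Red {α β : Type*} [DecidableEq α] [DecidableEq β] :
    MGraph α β → MGraph α β → Prop
  | del_edge (G : MGraph α β) (e : β) (he : e ∈ G.Es) :
      MGraph.Red G ⟨G.Vs, G.Es.erase e, G.ends⟩
  | del_vertex (G : MGraph α β) (v : α) (hv : v ∈ G.Vs) (e : β) (he : e ∈ G.Es)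
      (hloop : G.ends e = s(v, v)) :
      MGraph.Red G ⟨G.Vs.erase v, G.Es.filter (fun e => v ∉ G.ends e), G.ends⟩
  | move_edge (G : MGraph α β) (v w : α) (hv : v ∈ G.Vs) (hw : w ∈ G.Vs) (hvw : v ≠ w)
      (e f : β) (he : e ∈ G.Es) (hf : f ∈ G.Es)
      (hloopf : G.ends f = s(v, v)) (hends : G.ends e = s(v, w)) :
      MGraph.Red G ⟨G.Vs, G.Es, Function.update G.ends e s(w, w)⟩

/-- If a finite multigraph reduces to the empty graph, then the linear map
`K^{E(Γ)} → K^{V(Γ)}` sending `(x_e)_e` to `(∑_{e ∋ v} x_e)_v` (loops counted once)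
is surjective. -/
theorem mgraph_incidence_surjective_of_reduces_to_empty
    {K α β : Type*} [Field K] [DecidableEq α] [DecidableEq β]
    (G G' : MGraph α β) (hred : Relation.ReflTransGen MGraph.Red G G')
    (hV : G'.Vs = ∅) (hE : G'.Es = ∅) :
    ∀ y : α → K, ∃ x : β → K, ∀ v ∈ G.Vs,
      (∑ e ∈ G.Es, if v ∈ G.ends e then x e else 0) = y v := by
  clear hE
  induction hred using Relation.ReflTransGen.head_induction_on with
  | refl => exact fun y => ⟨0, by simp [hV]⟩
  | @head H c hstep _ ih =>
    intro y
    cases hstep with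
    | del_edge e he =>
      obtain ⟨x, hx⟩ := ih y
      refine ⟨Function.update x e 0, fun u hu => ?_⟩
      rw [← Finset.sum_erase_add _ _ he]
      have h1 : ∑ e' ∈ H.Es.erase e,
          (if u ∈ H.ends e' then Function.update x e 0 e' else 0)
          = ∑ e' ∈ H.Es.erase e, (if u ∈ H.ends e' then x e' else 0) := by
        refine Finset.sum_congr rfl fun e' he' => ?_
        rw [Function.update_of_ne (Finset.ne_of_mem_erase he')]
      rw [h1, hx u hu, Function.update_self]
      simp
    | del_vertex v hv e he hloop =>
      obtain ⟨x, hx⟩ := ih y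
      refine ⟨Function.update (fun e' => if v ∈ H.ends e' then 0 else x e') e (y v),
        fun u hu => ?_⟩
      by_cases huv : u = v
      · subst huv
        rw [← Finset.sum_erase_add _ _ he]
        have h1 : ∑ e' ∈ H.Es.erase e, (if u ∈ H.ends e' then
            Function.update (fun e' => if u ∈ H.ends e' then 0 else x e') e (y u) e' else 0)
            = 0 := by
          refine Finset.sum_eq_zero fun e' he' => ?_
          rw [Function.update_of_ne (Finset.ne_of_mem_erase he')]
          split <;> simp_all
        rw [h1, Function.update_self, hloop]
        simp
      · have := hx u (Finset.mem_erase.mpr ⟨huv, hu⟩)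
        rw [Finset.sum_filter] at this
        rw [← this]
        refine Finset.sum_congr rfl fun e' he' => ?_
        by_cases hee : e' = e
        · subst hee
          rw [Function.update_self, hloop]
          simp [Sym2.mem_iff, huv]
        · rw [Function.update_of_ne hee]
          by_cases hve : v ∈ H.ends e' <;> simp [hve]
    | move_edge v w hv hw hvw e f he hf hloopf hends =>
      obtain ⟨x, hx⟩ := ih y
      have hfe : f ≠ e := by
        intro h; rw [h, hends] at hloopf
        simp [Sym2.eq_iff, hvw] at hloopf
        exact hvw hloopf.symm
      refine ⟨Function.update x f (x f - x e), fun u hu => ?_⟩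
      have := hx u hu
      dsimp only at this
      rw [← Finset.sum_erase_add _ _ he,
        ← Finset.sum_erase_add _ _ (Finset.mem_erase.mpr ⟨hfe, hf⟩)] at this ⊢
      have h1 : ∑ e' ∈ (H.Es.erase e).erase f,
          (if u ∈ H.ends e' then Function.update x f (x f - x e) e' else 0)
          = ∑ e' ∈ (H.Es.erase e).erase f,
          (if u ∈ Function.update H.ends e s(w, w) e' then x e' else 0) := by
        refine Finset.sum_congr rfl fun e' he' => ?_
        rw [Function.update_of_ne (Finset.ne_of_mem_erase he'),
          Function.update_of_ne (Finset.ne_of_mem_erase (Finset.mem_of_mem_erase he'))]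
      rw [h1, ← this]
      simp only [Function.update_self, Function.update_of_ne hfe,
        Function.update_of_ne hfe.symm, hloopf, hends]
      by_cases huv : u = v
      · subst huv
        simp only [Sym2.mem_iff, hvw, Ne.symm hvw, or_self, or_false, false_or,
          if_true, if_false, ite_true, ite_false, if_pos rfl]
        ring
      · by_cases huw : u = w
        · subst huw
          simp [Sym2.mem_iff, Ne.symm hvw]
        · simp [Sym2.mem_iff, huv, huw]
end

section
/- Let K be a field with char(K) ≠ 2 and n ∈ ℕ. Then every n×n matrix over K can be written as PQ + P^T Q^T for some n×n matrices P and Q; in fact P and Q can both be chosen symmetric, so that PQ + P^T Q^T = PQ + QP. -/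
/-!
Following Taussky, `M = S⁻¹ * (S * M)` for any invertible symmetric `S` with `S * M = Mᵀ * S`,
and then `S * M` is symmetric too; halving the second factor gives `P * Q + Pᵀ * Qᵀ = M`.
Such an `S` is the Gram matrix of a nondegenerate symmetric form for which `M` is self-adjoint.
By the structure theorem over the PID `K[X]`, it suffices to build such a form on each cyclic
module `K[X] ⧸ (q)`; there the coefficient of `X ^ (deg q - 1)` in `f * g mod q` works.
-/

open Matrix Polynomial

section SelfAdjointSymmForm

variable (K A M : Type*) [Field K] [Semiring A] [Algebra K A] [AddCommGroup M] [Module K M]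
  [Module A M] [IsScalarTower K A M]

def HasSelfAdjointSymmForm : Prop :=
  ∃ B : LinearMap.BilinForm K M, B.IsSymm ∧ B.SeparatingLeft ∧
    ∀ (a : A) (x y : M), B (a • x) y = B x (a • y)

variable {K A M}

theorem HasSelfAdjointSymmForm.of_linearEquiv {N : Type*} [AddCommGroup N] [Module K N]
    [Module A N] [IsScalarTower K A N] (e : M ≃ₗ[A] N) (h : HasSelfAdjointSymmForm K A N) :
    HasSelfAdjointSymmForm K A M := by
  obtain ⟨B, hsymm, hsep, hadj⟩ := h
  let eK : N ≃ₗ[K] M := (e.restrictScalars K).symm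
  refine ⟨LinearMap.BilinForm.congr eK B, ⟨fun x y => hsymm.eq _ _⟩, hsep.congr eK eK,
    fun a x y => ?_⟩
  simp only [LinearMap.BilinForm.congr_apply, LinearEquiv.symm_symm, eK,
    LinearEquiv.restrictScalars_apply, map_smul, hadj]

theorem HasSelfAdjointSymmForm.pi {ι : Type*} [Fintype ι] [DecidableEq ι] {M : ι → Type*}
    [∀ i, AddCommGroup (M i)] [∀ i, Module K (M i)] [∀ i, Module A (M i)]
    [∀ i, IsScalarTower K A (M i)] (h : ∀ i, HasSelfAdjointSymmForm K A (M i)) :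
    HasSelfAdjointSymmForm K A (∀ i, M i) := by
  choose B hsymm hsep hadj using h
  refine ⟨∑ i, (B i).compl₁₂ (LinearMap.proj i) (LinearMap.proj i), ⟨fun x y => ?_⟩,
    fun x hx => funext fun i => hsep i (x i) fun y => ?_, fun a x y => ?_⟩
  · simp [(hsymm _).eq]
  · have := hx (Pi.single i y)
    simp only [LinearMap.sum_apply, LinearMap.compl₁₂_apply, LinearMap.proj_apply] at this
    rwa [Finset.sum_eq_single i (fun j _ hj => by simp [Pi.single_eq_of_ne hj]) (by simp),
      Pi.single_eq_same] at this
  · simp [hadj]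

theorem hasSelfAdjointSymmForm_of_separating {R S : Type*} [CommRing R] [Algebra K R]
    [CommRing S] [Algebra K S] [Algebra R S] [IsScalarTower K R S]
    (φ : S →ₗ[K] K) (hφ : ∀ x : S, (∀ y, φ (x * y) = 0) → x = 0) :
    HasSelfAdjointSymmForm K R S :=
  ⟨(LinearMap.mul K S).compr₂ φ, ⟨fun x y => by simp [mul_comm]⟩, hφ,
    fun r x y => by simp⟩

theorem AdjoinRoot.exists_separating_functional {q : K[X]} (hq : q.Monic) :
    ∃ φ : AdjoinRoot q →ₗ[K] K, ∀ x, (∀ y, φ (x * y) = 0) → x = 0 := by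
  refine ⟨(lcoeff K (q.natDegree - 1)).comp (AdjoinRoot.modByMonicHom hq), fun x hx => ?_⟩
  obtain ⟨f, rfl⟩ := AdjoinRoot.mk_surjective x
  set r := f %ₘ q
  have hfr : AdjoinRoot.mk q r = AdjoinRoot.mk q f := by
    simpa only [AdjoinRoot.modByMonicHom_mk] using AdjoinRoot.mk_leftInverse hq (AdjoinRoot.mk q f)
  rw [← hfr] at hx ⊢
  by_contra hr
  have hr0 : r ≠ 0 := by rintro h; rw [h, map_zero] at hr; exact hr rfl
  have hrq : r.natDegree < q.natDegree := natDegree_lt_natDegree hr0 (degree_modByMonic_lt f hq)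
  obtain ⟨k, hk⟩ : ∃ k, q.natDegree - 1 = r.natDegree + k :=
    ⟨q.natDegree - 1 - r.natDegree, by omega⟩
  have hdeg : (r * X ^ k).degree < q.degree := by
    rw [degree_mul, degree_X_pow, degree_eq_natDegree hr0, degree_eq_natDegree hq.ne_zero]
    exact_mod_cast (by omega : r.natDegree + k < q.natDegree)
  -- `r * X ^ k` is still reduced mod `q`, and its top coefficient is the leading one of `r`.
  have := hx (AdjoinRoot.mk q (X ^ k))
  rw [← map_mul, LinearMap.comp_apply, AdjoinRoot.modByMonicHom_mk, lcoeff_apply,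
    (modByMonic_eq_self_iff hq).mpr hdeg, hk, coeff_mul_X_pow] at this
  exact hr0 (leadingCoeff_eq_zero.mp this)

theorem hasSelfAdjointSymmForm_quotient_span {q : K[X]} (hq : q ≠ 0) :
    HasSelfAdjointSymmForm K K[X] (K[X] ⧸ K[X] ∙ q) := by
  have hspan : K[X] ∙ q = K[X] ∙ (q * C q.leadingCoeff⁻¹) :=
    (Ideal.span_singleton_mul_right_unit (isUnit_C.mpr (by simpa using hq)) q).symm
  rw [hspan]
  obtain ⟨φ, hφ⟩ := AdjoinRoot.exists_separating_functional (monic_mul_leadingCoeff_inv hq)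
  exact hasSelfAdjointSymmForm_of_separating (R := K[X]) (S := K[X] ⧸ K[X] ∙ _) φ hφ

end SelfAdjointSymmForm

section

variable {K : Type*} [Field K]

theorem LinearMap.exists_isSymm_separatingLeft_isAdjointPair {V : Type*} [AddCommGroup V]
    [Module K V] [FiniteDimensional K V] (f : Module.End K V) :
    ∃ B : LinearMap.BilinForm K V, B.IsSymm ∧ B.SeparatingLeft ∧ B.IsAdjointPair B f f := by
  classical
  obtain ⟨ι, _, p, hp, e, ⟨g⟩⟩ :=
    Module.equiv_directSum_of_isTorsion (Module.AEval.isTorsion_of_finiteDimensional K V f)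
  obtain ⟨B, hsymm, hsep, hadj⟩ : HasSelfAdjointSymmForm K K[X] (Module.AEval' f) :=
    .of_linearEquiv (g.trans (DirectSum.linearEquivFunOnFintype K[X] ι _))
      (.pi fun i => hasSelfAdjointSymmForm_quotient_span (pow_ne_zero _ (hp i).ne_zero))
  let of := Module.AEval'.of f
  refine ⟨LinearMap.BilinForm.congr of.symm B, ⟨fun x y => hsymm.eq _ _⟩,
    hsep.congr of.symm of.symm, fun x y => ?_⟩
  simp [of, ← Module.AEval'.X_smul_of, hadj]

theorem Matrix.exists_isSymm_det_ne_zero_transpose_mul_eq {n : Type*} [Fintype n]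
    [DecidableEq n] (M : Matrix n n K) :
    ∃ S : Matrix n n K, S.IsSymm ∧ S.det ≠ 0 ∧ Mᵀ * S = S * M := by
  obtain ⟨B, hsymm, hsep, hadj⟩ :=
    LinearMap.exists_isSymm_separatingLeft_isAdjointPair (toLin' M)
  refine ⟨LinearMap.toMatrix₂' K B, ?_, ?_, ?_⟩
  · ext i j
    simp [LinearMap.toMatrix₂'_apply, hsymm.eq]
  · exact nondegenerate_iff_det_ne_zero.mp
      (LinearMap.separatingLeft_toMatrix₂'_iff.mpr hsep).nondegenerate
  · rw [← Matrix.IsAdjointPair, ← isAdjointPair_toLinearMap₂',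
      Matrix.toLinearMap₂'_toMatrix']
    exact hadj

theorem Matrix.exists_isSymm_isSymm_eq_mul {n : Type*} [Fintype n] [DecidableEq n]
    (M : Matrix n n K) : ∃ P Q : Matrix n n K, P.IsSymm ∧ Q.IsSymm ∧ M = P * Q := by
  obtain ⟨S, hS, hdet, hSM⟩ := M.exists_isSymm_det_ne_zero_transpose_mul_eq
  refine ⟨S⁻¹, S * M, hS.inv, ?_, ?_⟩
  · rw [IsSymm, transpose_mul, hS.eq, hSM]
  · rw [← Matrix.mul_assoc, nonsing_inv_mul _ hdet.isUnit, Matrix.one_mul]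

end

/-- If `char K ≠ 2`, every `n × n` matrix over `K` can be written as `PQ + PᵀQᵀ` with
`P` and `Q` both symmetric (so that `PQ + PᵀQᵀ = PQ + QP`). -/
theorem exists_symm_symm_eq {K : Type*} [Field K] (hchar : ringChar K ≠ 2)
    (n : ℕ) (M : Matrix (Fin n) (Fin n) K) :
    ∃ P Q : Matrix (Fin n) (Fin n) K,
      P.IsSymm ∧ Q.IsSymm ∧ M = P * Q + Pᵀ * Qᵀ := by
  obtain ⟨P, Q, hP, hQ, rfl⟩ := M.exists_isSymm_isSymm_eq_mul
  refine ⟨P, (2 : K)⁻¹ • Q, hP, hQ.smul _, ?_⟩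
  rw [(hQ.smul _).eq, hP.eq, ← two_smul K, Matrix.mul_smul, smul_smul,
    mul_inv_cancel₀ (Ring.two_ne_zero hchar), one_smul]
end

section
/- Let K be an algebraically closed field of characteristic 2 and n ∈ ℕ. Then the set {PQ + P^T Q^T : P, Q ∈ gl_n(K)} is Zariski-dense in the space sl_n(K) of trace-zero n×n matrices. In particular, a polynomial function on gl_n vanishing on all matrices of the form PQ + P^TQ^T vanishes on all of sl_n. -/
open Matrix

/-!
Let `X` be a trace-zero matrix over a field of characteristic `2` with at least `n` elements, and
suppose `e₀` is a cyclic vector of `X`, i.e. the Krylov matrix `V = (e₀, X e₀, …, X ^ (n-1) e₀)` is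
invertible. Then `C = V⁻¹ X V` is a companion matrix, and its diagonal vanishes because its trace
does. For distinct scalars `d` and the lower shift `N`, put `A = diagonal d + N`. Both `Aᵀ` and
`C - A` are upper triangular with diagonal `d` (as `-d = d`), so they are diagonalizable with the
same eigenvalues, hence similar: `C - A = S Aᵀ S⁻¹`. Taking `P = S`, `Q = Aᵀ S⁻¹` gives
`PQ + PᵀQᵀ = C`, and sums `PQ + PᵀQᵀ` are stable under conjugation, so `X` is one as well.

Parametrize `sl_n` polynomially by `Y ↦ Y - tr(Y) E₀₀`. Having `e₀` as a cyclic vector is then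
the non-vanishing of a polynomial in `Y`, which is not identically zero since `N` has `e₀` as a
cyclic vector. Over an infinite field, a polynomial that vanishes wherever another nonzero
polynomial does not vanishes identically.
-/

namespace Matrix

section CommSemiring

variable {R : Type*} [CommSemiring R] {n : Type*} [Fintype n] [DecidableEq n]

def IsMulAddTransposeMul (X : Matrix n n R) : Prop :=
  ∃ P Q : Matrix n n R, P * Q + Pᵀ * Qᵀ = X

theorem isMulAddTransposeMul_add_conj_transpose (A : Matrix n n R) (S : (Matrix n n R)ˣ) :
    IsMulAddTransposeMul (A + (S : Matrix n n R) * Aᵀ * (↑S⁻¹ : Matrix n n R)) := by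
  refine ⟨S, Aᵀ * (↑S⁻¹ : Matrix n n R), ?_⟩
  rw [transpose_mul, transpose_transpose, ← mul_assoc (S : Matrix n n R)ᵀ, ← transpose_mul,
    Units.inv_mul, transpose_one, one_mul, mul_assoc, add_comm]

theorem IsMulAddTransposeMul.units_conj {X : Matrix n n R} (hX : IsMulAddTransposeMul X)
    (T : (Matrix n n R)ˣ) :
    IsMulAddTransposeMul ((T : Matrix n n R) * X * (↑T⁻¹ : Matrix n n R)) := by
  obtain ⟨P, Q, rfl⟩ := hX
  have hT : (T : Matrix n n R)ᵀ * (↑T⁻¹ : Matrix n n R)ᵀ = 1 := by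
    rw [← transpose_mul, Units.inv_mul, transpose_one]
  refine ⟨T * P * (T : Matrix n n R)ᵀ, (↑T⁻¹ : Matrix n n R)ᵀ * Q * (↑T⁻¹ : Matrix n n R), ?_⟩
  simp only [transpose_mul, transpose_transpose, mul_add, add_mul, mul_assoc]
  simp only [← mul_assoc (T : Matrix n n R)ᵀ, hT, one_mul]

end CommSemiring

section Triangular

variable {F : Type*} [Field F] {n : Type*} [Fintype n] [DecidableEq n] [LinearOrder n]

theorem exists_mulVec_eq_smul_of_isUpperTriangular {B : Matrix n n F}
    (hB : B.IsUpperTriangular) (k : n) : ∃ v ≠ 0, B *ᵥ v = B k k • v := by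
  have hdet : (B - diagonal fun _ => B k k).det = 0 := by
    rw [det_of_isUpperTriangular (hB.sub (blockTriangular_diagonal _))]
    exact Finset.prod_eq_zero (Finset.mem_univ k) (by simp)
  obtain ⟨v, hv, hBv⟩ := exists_mulVec_eq_zero_iff.mpr hdet
  refine ⟨v, hv, funext fun i => ?_⟩
  simpa [sub_mulVec, mulVec_diagonal, sub_eq_zero] using congrFun hBv i

theorem exists_units_mul_eq_mul_diagonal_of_isUpperTriangular {B : Matrix n n F}
    (hB : B.IsUpperTriangular) (hd : Function.Injective B.diag) :
    ∃ U : (Matrix n n F)ˣ, B * U = U * diagonal B.diag := by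
  choose v hv0 hv using exists_mulVec_eq_smul_of_isUpperTriangular hB
  have hli : LinearIndependent F v :=
    Module.End.eigenvectors_linearIndependent' B.mulVecLin B.diag hd v fun k =>
      ⟨by simpa [Module.End.mem_eigenspace_iff] using hv k, hv0 k⟩
  let U : Matrix n n F := of fun i k => v k i
  have hU : IsUnit U := linearIndependent_cols_iff_isUnit.mp hli
  refine ⟨hU.unit, ?_⟩
  ext i k
  rw [mul_diagonal]
  simpa [U, mul_apply, mulVec, dotProduct] using (congrFun (hv k) i).trans (mul_comm _ _)

theorem exists_units_conj_eq_of_isUpperTriangular {A B : Matrix n n F}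
    (hA : A.IsUpperTriangular) (hB : B.IsUpperTriangular) (hAB : A.diag = B.diag)
    (hd : Function.Injective A.diag) :
    ∃ S : (Matrix n n F)ˣ, B = (S : Matrix n n F) * A * (↑S⁻¹ : Matrix n n F) := by
  obtain ⟨U, hU⟩ := exists_units_mul_eq_mul_diagonal_of_isUpperTriangular hA hd
  obtain ⟨W, hW⟩ := exists_units_mul_eq_mul_diagonal_of_isUpperTriangular hB (hAB ▸ hd)
  refine ⟨W * U⁻¹, ?_⟩
  rw [← Units.eq_mul_inv_iff_mul_eq] at hU hW
  rw [← hAB] at hW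
  set D := diagonal A.diag
  rw [hW, hU]
  simp [mul_assoc]

end Triangular

section Companion

variable {R : Type*} [Semiring R] {n : ℕ}

def lowerShift (n : ℕ) (R : Type*) [Zero R] [One R] : Matrix (Fin n) (Fin n) R :=
  of fun i j => if (i : ℕ) = j + 1 then 1 else 0

@[simp]
theorem lowerShift_apply_self (i : Fin n) : lowerShift n R i i = 0 := by
  simp [lowerShift]

theorem trace_lowerShift : (lowerShift n R).trace = 0 := by
  simp [trace]

theorem isUpperTriangular_transpose_diagonal_add_lowerShift (d : Fin n → R) :
    (diagonal d + lowerShift n R)ᵀ.IsUpperTriangular := by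
  intro i j (hij : j < i)
  simp [lowerShift, diagonal, hij.ne, show (j : ℕ) ≠ i + 1 by omega]

def IsCompanion (C : Matrix (Fin n) (Fin n) R) : Prop :=
  ∀ i j : Fin n, (j : ℕ) + 1 < n → C i j = lowerShift n R i j

theorem IsCompanion.diag_eq_zero {C : Matrix (Fin n) (Fin n) R} (hC : IsCompanion C)
    (htr : C.trace = 0) : C.diag = 0 := by
  have hlt (i : Fin n) (hi : (i : ℕ) + 1 < n) : C i i = 0 := by
    rw [hC i i hi, lowerShift_apply_self]
  funext i
  by_cases hi : (i : ℕ) + 1 < n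
  · exact hlt i hi
  · rw [Pi.zero_apply, ← htr, trace, Finset.sum_eq_single (f := C.diag) i
      (fun j _ hj => hlt j (by omega)) (absurd (Finset.mem_univ i))]

theorem IsCompanion.isUpperTriangular_sub {R : Type*} [Ring R] {C : Matrix (Fin n) (Fin n) R}
    (hC : IsCompanion C) (d : Fin n → R) :
    (C - (diagonal d + lowerShift n R)).IsUpperTriangular := by
  intro i j (hij : j < i)
  simp [hC i j (by omega), diagonal, hij.ne']

variable [NeZero n]

def krylov (X : Matrix (Fin n) (Fin n) R) : Matrix (Fin n) (Fin n) R :=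
  of fun i k => (X ^ (k : ℕ)) i 0

theorem krylov_map {S : Type*} [Semiring S] (X : Matrix (Fin n) (Fin n) R) (φ : R →+* S) :
    krylov (X.map φ) = (krylov X).map φ := by
  ext i k
  simp [krylov, ← Matrix.map_pow]

theorem lowerShift_pow_apply_zero (k : ℕ) (i : Fin n) :
    (lowerShift n R ^ k) i 0 = if (i : ℕ) = k then 1 else 0 := by
  induction k generalizing i with
  | zero => simp [one_apply, Fin.val_eq_zero_iff]
  | succ k ih =>
    rw [pow_succ', mul_apply]
    simp_rw [ih]
    by_cases hk : k < n
    · rw [Finset.sum_eq_single ⟨k, hk⟩ (fun j _ hj => by simp [Fin.ext_iff] at hj; simp [hj])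
        (by simp)]
      simp [lowerShift]
    · have hj (j : Fin n) : (j : ℕ) ≠ k := by omega
      have hi : (i : ℕ) ≠ k + 1 := by omega
      simp [hj, hi]

theorem krylov_lowerShift : krylov (lowerShift n R) = 1 := by
  ext i k
  simp [krylov, lowerShift_pow_apply_zero, one_apply, Fin.ext_iff]

theorem isCompanion_inv_krylov_mul_mul_krylov {X : Matrix (Fin n) (Fin n) R}
    (V : (Matrix (Fin n) (Fin n) R)ˣ) (hV : (V : Matrix (Fin n) (Fin n) R) = krylov X) :
    IsCompanion ((↑V⁻¹ : Matrix (Fin n) (Fin n) R) * X * (V : Matrix (Fin n) (Fin n) R)) := by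
  intro i j hj
  have hcol (t : Fin n) : (X * V) t j = V t ⟨j + 1, hj⟩ := by
    simp only [hV, krylov, mul_apply, of_apply]
    rw [← mul_apply, ← pow_succ']
  rw [mul_assoc, mul_apply]
  simp_rw [hcol]
  rw [← mul_apply, Units.inv_mul, one_apply]
  simp [lowerShift, Fin.ext_iff]

theorem isMulAddTransposeMul_of_isUnit_krylov {F : Type*} [Field F] [CharP F 2] (d : Fin n ↪ F)
    {X : Matrix (Fin n) (Fin n) F} (htr : X.trace = 0) (hV : IsUnit (krylov X)) :
    IsMulAddTransposeMul X := by
  set V := hV.unit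
  set C := (↑V⁻¹ : Matrix (Fin n) (Fin n) F) * X * (V : Matrix (Fin n) (Fin n) F)
  have hC : IsCompanion C := isCompanion_inv_krylov_mul_mul_krylov V hV.unit_spec
  have hCdiag : C.diag = 0 := hC.diag_eq_zero (by rw [trace_units_conj', htr])
  set A := diagonal d + lowerShift n F
  have hAdiag : Aᵀ.diag = d := by
    funext i
    simp [A]
  have hBdiag : (C - A).diag = d := by
    funext i
    have hCi : C i i = 0 := congrFun hCdiag i
    simp [A, hCi, CharTwo.neg_eq]
  obtain ⟨S, hS⟩ := exists_units_conj_eq_of_isUpperTriangular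
    (isUpperTriangular_transpose_diagonal_add_lowerShift d) (hC.isUpperTriangular_sub d)
    (hAdiag.trans hBdiag.symm) (by rw [hAdiag]; exact d.injective)
  have hCsum : IsMulAddTransposeMul C := by
    have := isMulAddTransposeMul_add_conj_transpose A S
    rwa [← hS, add_sub_cancel] at this
  have := hCsum.units_conj V
  rwa [← mul_assoc, ← mul_assoc, Units.mul_inv, one_mul, mul_assoc, Units.mul_inv, mul_one] at this

end Companion

section TraceZeroPart

variable {R : Type*} [Ring R] {n : Type*} [Fintype n] [DecidableEq n] (i₀ : n)

def traceZeroPart (Y : Matrix n n R) : Matrix n n R :=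
  Y - single i₀ i₀ Y.trace

theorem trace_traceZeroPart (Y : Matrix n n R) : (traceZeroPart i₀ Y).trace = 0 := by
  simp [traceZeroPart]

theorem traceZeroPart_of_trace_eq_zero {Y : Matrix n n R} (hY : Y.trace = 0) :
    traceZeroPart i₀ Y = Y := by
  simp [traceZeroPart, hY]

theorem traceZeroPart_map {S : Type*} [Ring S] (Y : Matrix n n R) (φ : R →+* S) :
    (traceZeroPart i₀ Y).map φ = traceZeroPart i₀ (Y.map φ) := by
  simp [traceZeroPart, Matrix.map_sub, AddMonoidHom.map_trace]

end TraceZeroPart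

end Matrix

theorem MvPolynomial.eq_zero_of_eval_ne_zero {K σ : Type*} [CommRing K] [IsDomain K]
    [Infinite K] {p q : MvPolynomial σ K} (hq : q ≠ 0) (h : ∀ x, eval x q ≠ 0 → eval x p = 0) :
    p = 0 := by
  have hpq : p * q = 0 := MvPolynomial.funext fun x => by
    by_cases hx : eval x q = 0 <;> simp [hx, h x]
  exact (mul_eq_zero.mp hpq).resolve_right hq

section Generic

open MvPolynomial

variable {K : Type*} [Field K] {n : ℕ} [NeZero n]

noncomputable def genericTraceZero (n : ℕ) [NeZero n] (K : Type*) [CommRing K] :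
    Matrix (Fin n) (Fin n) (MvPolynomial (Fin n × Fin n) K) :=
  traceZeroPart 0 (mvPolynomialX (Fin n) (Fin n) K)

theorem genericTraceZero_map_eval (A : Matrix (Fin n) (Fin n) K) :
    (genericTraceZero n K).map (eval fun p => A p.1 p.2) = traceZeroPart 0 A := by
  rw [genericTraceZero, traceZeroPart_map, eval, coe_eval₂Hom, mvPolynomialX_map_eval₂]

theorem eval_det_krylov_genericTraceZero (A : Matrix (Fin n) (Fin n) K) :
    eval (fun p => A p.1 p.2) (krylov (genericTraceZero n K)).det =
      (krylov (traceZeroPart 0 A)).det := by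
  rw [RingHom.map_det, RingHom.mapMatrix_apply, ← krylov_map, genericTraceZero_map_eval]

theorem det_krylov_genericTraceZero_ne_zero : (krylov (genericTraceZero n K)).det ≠ 0 := by
  intro h
  have := congrArg (eval fun p => lowerShift n K p.1 p.2) h
  rw [eval_det_krylov_genericTraceZero, traceZeroPart_of_trace_eq_zero _ trace_lowerShift,
    krylov_lowerShift] at this
  simp at this

theorem eval_eq_zero_of_trace_eq_zero_of_isMulAddTransposeMul [Infinite K] [CharP K 2]
    (f : MvPolynomial (Fin n × Fin n) K)
    (hf : ∀ X : Matrix (Fin n) (Fin n) K, IsMulAddTransposeMul X → eval (fun p => X p.1 p.2) f = 0)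
    {M : Matrix (Fin n) (Fin n) K} (hM : M.trace = 0) : eval (fun p => M p.1 p.2) f = 0 := by
  set G := genericTraceZero n K
  have hfG (A : Matrix (Fin n) (Fin n) K) :
      eval (fun p => A p.1 p.2) (bind₁ (fun p => G p.1 p.2) f) =
        eval (fun p => traceZeroPart 0 A p.1 p.2) f := by
    rw [← genericTraceZero_map_eval]
    exact eval₂Hom_bind₁ _ _ _ f
  have hzero : bind₁ (fun p => G p.1 p.2) f = 0 := by
    refine eq_zero_of_eval_ne_zero det_krylov_genericTraceZero_ne_zero fun x hx => ?_
    obtain ⟨A, rfl⟩ : ∃ A : Matrix (Fin n) (Fin n) K, (fun p => A p.1 p.2) = x :=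
      ⟨of fun i j => x (i, j), rfl⟩
    rw [eval_det_krylov_genericTraceZero] at hx
    rw [hfG]
    exact hf _ (isMulAddTransposeMul_of_isUnit_krylov
      (Fin.valEmbedding.trans (Infinite.natEmbedding K)) (trace_traceZeroPart _ A)
      ((isUnit_iff_isUnit_det _).mpr (isUnit_iff_ne_zero.mpr hx)))
  have := congrArg (eval fun p => M p.1 p.2) hzero
  rwa [hfG, traceZeroPart_of_trace_eq_zero _ hM, map_zero] at this

end Generic

/-- Over an algebraically closed field of characteristic 2, the set
`{PQ + PᵀQᵀ : P, Q ∈ gl_n}` is Zariski-dense in `sl_n`: any polynomial function on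
`gl_n` vanishing on all matrices of the form `PQ + PᵀQᵀ` vanishes on all trace-zero
matrices. -/
theorem dense_in_sl_of_char_two {K : Type*} [Field K] [IsAlgClosed K]
    (hchar : ringChar K = 2) (n : ℕ)
    (f : MvPolynomial (Fin n × Fin n) K)
    (hf : ∀ P Q : Matrix (Fin n) (Fin n) K,
      MvPolynomial.eval (fun p => (P * Q + Pᵀ * Qᵀ) p.1 p.2) f = 0) :
    ∀ M : Matrix (Fin n) (Fin n) K, M.trace = 0 →
      MvPolynomial.eval (fun p => M p.1 p.2) f = 0 := by
  intro M hM
  have : CharP K 2 := ringChar.of_eq hchar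
  rcases n with _ | m
  · rw [Subsingleton.elim M (0 * 0 + 0ᵀ * 0ᵀ)]
    exact hf 0 0
  refine eval_eq_zero_of_trace_eq_zero_of_isMulAddTransposeMul f ?_ hM
  rintro _ ⟨P, Q, rfl⟩
  exact hf P Q
end

section
/- Let K be an algebraically closed field of characteristic 2 and n ∈ ℕ. Consider the derivative of the map φ(P,Q) = PQ + P^TQ^T at the point (R, S), where R is the n×n nilpotent upper-shift matrix (ones on the superdiagonal) and S is the anti-diagonal permutation matrix (ones on the anti-diagonal). Then the linear map d_{(R,S)}φ : gl_n ⊕ gl_n → gl_n/span(E_{n,n}), (P,Q) ↦ PS + P^TS^T + RQ + R^TQ^T mod E_{n,n}, is surjective. -/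
open Matrix

/-- The `n × n` nilpotent upper-shift matrix, with ones on the superdiagonal. -/
noncomputable def upperShift (K : Type*) [Field K] (n : ℕ) :
    Matrix (Fin n) (Fin n) K :=
  Matrix.of fun i j => if (i : ℕ) + 1 = (j : ℕ) then 1 else 0

/-- The `n × n` anti-diagonal permutation matrix, with ones on the anti-diagonal. -/
noncomputable def antiDiag (K : Type*) [Field K] (n : ℕ) :
    Matrix (Fin n) (Fin n) K :=
  Matrix.of fun i j => if (i : ℕ) + (j : ℕ) + 1 = n then 1 else 0

/-!
Entrywise, with `0`-based indices and out-of-range terms read as `0`,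
`(PS + PᵀSᵀ + RQ + RᵀQᵀ)ᵢⱼ = P_{i, n-1-j} + P_{n-1-j, i} + Q_{i+1, j} + Q_{j, i-1}`.
All rows but the last of a target `M` are matched by `Q` alone, solving
`Q_{i+1, j} = M_{ij} - Q_{j, i-1}` by recursion on `i + j`. The remaining error lives in the
last row; putting it, reversed, in the last column of `P` reproduces it there, up to a copy in
the first column that the first row of `Q` cancels, and up to the corner entry, which is
absorbed by the multiple of `E_{n,n}`.
-/

theorem Fin.sum_ite_val_eq {n : ℕ} {M : Type*} [AddCommMonoid M] (m : ℕ) (f : Fin n → M) :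
    (∑ k : Fin n, if m = (k : ℕ) then f k else 0) = if h : m < n then f ⟨m, h⟩ else 0 := by
  split_ifs with h
  · simpa [Fin.ext_iff] using Finset.sum_ite_eq Finset.univ (⟨m, h⟩ : Fin n) f
  · exact Finset.sum_eq_zero fun k _ => if_neg (by omega)

def shiftSolution {α : Type*} [AddGroup α] (m : ℕ → ℕ → α) : ℕ → ℕ → α
  | 0, _ => 0
  | 1, s => m 0 s
  | r + 2, s => m (r + 1) s - shiftSolution m s r
termination_by r s => r + s

theorem shiftSolution_succ_add {α : Type*} [AddGroup α] (m : ℕ → ℕ → α) (r s : ℕ) :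
    shiftSolution m (r + 1) s + (if 0 < r then shiftSolution m s (r - 1) else 0) = m r s := by
  cases r with
  | zero => simp [shiftSolution]
  | succ r => simp [shiftSolution]

section

variable {K : Type*} [Field K] {n : ℕ}

theorem antiDiag_apply (i j : Fin n) : antiDiag K n i j = if i = j.rev then 1 else 0 := by
  simp only [antiDiag, of_apply, Fin.ext_iff, Fin.val_rev]
  congr 1
  apply propext
  omega

theorem mul_antiDiag_apply (P : Matrix (Fin n) (Fin n) K) (i j : Fin n) :
    (P * antiDiag K n) i j = P i j.rev := by
  simp [mul_apply, antiDiag_apply]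

theorem transpose_mul_antiDiag_transpose_apply (P : Matrix (Fin n) (Fin n) K) (i j : Fin n) :
    (Pᵀ * (antiDiag K n)ᵀ) i j = P j.rev i := by
  have hrev (k : Fin n) : j = k.rev ↔ k = j.rev := by rw [eq_comm, Fin.rev_eq_iff]
  simp [mul_apply, antiDiag_apply, hrev]

theorem upperShift_mul_apply (Q : Matrix (Fin n) (Fin n) K) (i j : Fin n) :
    (upperShift K n * Q) i j = if h : (i : ℕ) + 1 < n then Q ⟨i + 1, h⟩ j else 0 := by
  simp [mul_apply, upperShift, Fin.sum_ite_val_eq]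

theorem transpose_upperShift_mul_transpose_apply (Q : Matrix (Fin n) (Fin n) K) (i j : Fin n) :
    ((upperShift K n)ᵀ * Qᵀ) i j = if h : 0 < (i : ℕ) then Q j ⟨i - 1, by omega⟩ else 0 := by
  obtain ⟨_ | i, hi⟩ := i
  · simp [mul_apply, upperShift]
  · simp [mul_apply, upperShift, Fin.sum_ite_val_eq, eq_comm (b := i), Nat.lt_of_succ_lt hi]

/-- The derivative `d_{(R,S)}φ` of `φ(P, Q) = PQ + PᵀQᵀ` at `R = upperShift K n`,
`S = antiDiag K n`. -/
noncomputable def phiDeriv (P Q : Matrix (Fin n) (Fin n) K) : Matrix (Fin n) (Fin n) K :=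
  P * antiDiag K n + Pᵀ * (antiDiag K n)ᵀ + upperShift K n * Q + (upperShift K n)ᵀ * Qᵀ

theorem phiDeriv_apply (P Q : Matrix (Fin n) (Fin n) K) (i j : Fin n) :
    phiDeriv P Q i j = P i j.rev + P j.rev i
      + (if h : (i : ℕ) + 1 < n then Q ⟨i + 1, h⟩ j else 0)
      + (if h : 0 < (i : ℕ) then Q j ⟨i - 1, by omega⟩ else 0) := by
  simp only [phiDeriv, Matrix.add_apply, mul_antiDiag_apply,
    transpose_mul_antiDiag_transpose_apply, upperShift_mul_apply,
    transpose_upperShift_mul_transpose_apply]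

theorem phiDeriv_add (P₁ P₂ Q₁ Q₂ : Matrix (Fin n) (Fin n) K) :
    phiDeriv (P₁ + P₂) (Q₁ + Q₂) = phiDeriv P₁ Q₁ + phiDeriv P₂ Q₂ := by
  simp only [phiDeriv, add_mul, mul_add, transpose_add]
  abel

theorem exists_phiDeriv_zero_apply_eq_of_lt (M : Matrix (Fin n) (Fin n) K) :
    ∃ Q : Matrix (Fin n) (Fin n) K,
      ∀ i j : Fin n, (i : ℕ) + 1 < n → phiDeriv 0 Q i j = M i j := by
  let m : ℕ → ℕ → K := fun a b => if h : a < n ∧ b < n then M ⟨a, h.1⟩ ⟨b, h.2⟩ else 0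
  refine ⟨of fun a b => shiftSolution m a b, fun i j hi => ?_⟩
  simpa [phiDeriv_apply, hi, m] using shiftSolution_succ_add m i j

theorem exists_phiDeriv_eq_add_smul_single (last : Fin n) (hlast : (last : ℕ) + 1 = n)
    (N : Matrix (Fin n) (Fin n) K) (hN : ∀ i j : Fin n, (i : ℕ) + 1 < n → N i j = 0) :
    ∃ (P Q : Matrix (Fin n) (Fin n) K) (c : K), phiDeriv P Q = N + c • single last last 1 := by
  obtain ⟨v, hv⟩ : ∃ v : ℕ → K, ∀ j, N last j = v j :=
    ⟨fun k => if h : k < n then N last ⟨k, h⟩ else 0, fun j => by simp⟩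
  refine ⟨of fun a b => if (b : ℕ) + 1 = n ∧ 0 < (a : ℕ) then v (n - 1 - a) else 0,
    of fun a b => if (a : ℕ) = 0 then -v (n - 2 - b) else 0, -v (n - 1), ?_⟩
  ext i j
  have hN' : N i j = if (i : ℕ) + 1 = n then v j else 0 := by
    split_ifs with hi
    · rw [show i = last by omega, hv]
    · exact hN i j (by omega)
  rw [phiDeriv_apply, Matrix.add_apply, Matrix.smul_apply, single_apply, hN']
  simp only [of_apply, Fin.val_rev, Fin.ext_iff, smul_eq_mul, mul_ite, mul_one, mul_zero]
  grind

end

/-- Over an algebraically closed field of characteristic 2, the derivative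
`(P, Q) ↦ PS + PᵀSᵀ + RQ + RᵀQᵀ` of `φ(P,Q) = PQ + PᵀQᵀ` at `(R, S)`, with `R` the
upper-shift matrix and `S` the anti-diagonal matrix, is surjective onto
`gl_n / span(E_{n,n})`. -/
theorem derivative_surjective_mod_corner {K : Type*} [Field K] (n : ℕ) (hn : 0 < n) :
    ∀ M : Matrix (Fin n) (Fin n) K,
      ∃ (P Q : Matrix (Fin n) (Fin n) K) (c : K),
        P * antiDiag K n + Pᵀ * (antiDiag K n)ᵀ +
          upperShift K n * Q + (upperShift K n)ᵀ * Qᵀ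
          = M + c • Matrix.single
              (⟨n - 1, by omega⟩ : Fin n) (⟨n - 1, by omega⟩ : Fin n) (1 : K) := by
  intro M
  obtain ⟨Q₁, hQ₁⟩ := exists_phiDeriv_zero_apply_eq_of_lt M
  obtain ⟨P, Q₂, c, hPQ₂⟩ := exists_phiDeriv_eq_add_smul_single ⟨n - 1, by omega⟩
    (Nat.sub_add_cancel hn) (M - phiDeriv 0 Q₁)
    fun i j hi => by rw [Matrix.sub_apply, hQ₁ i j hi, sub_self]
  refine ⟨P, Q₁ + Q₂, c, ?_⟩
  calc phiDeriv P (Q₁ + Q₂) = phiDeriv 0 Q₁ + phiDeriv P Q₂ := by rw [← phiDeriv_add, zero_add]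
    _ = _ := by
      rw [hPQ₂]
      abel
end
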